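/- For n ≥ 1, the number of inversion sequences of length n avoiding the pattern 001 equals 2^{n-1}. -/

import Mathlib

/-!
If `e i < i`, look at the entry at index `v = e i < i`: either `e v = v`, a repeat of the value
`e i` before position `i`, so that nothing after `i` may exceed it; or `e v < v`, and induction
applies at `v`. So a 001-avoiding inversion sequence is the identity up to some index and weakly
decreasing, strictly below the diagonal, from there on. By stars and bars such a sequence is
encoded by the set `{e i + (n - 1 - i) | e i < i} ⊆ {0, …, n - 2}`, whose `c`-th smallest element
is `e (n - 1 - c) + c`; every subset arises, so there are `2 ^ (n - 1)` of them.
-/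

open Finset

def Avoids001 {n : ℕ} (e : Fin n → ℕ) : Prop :=
  ¬ ∃ i j k : Fin n, i < j ∧ j < k ∧ e i = e j ∧ e j < e k

theorem Fin.apply_add_sub_le_of_strictMono {k : ℕ} {f : Fin k → ℕ} (hf : StrictMono f)
    {a b : Fin k} (hab : a ≤ b) : f a + (b - a : ℕ) ≤ f b := by
  have := card_le_card_of_injOn f (s := Icc a b) (t := Icc (f a) (f b))
    (fun x hx => by
      rw [coe_Icc] at hx ⊢
      exact ⟨hf.monotone hx.1, hf.monotone hx.2⟩) hf.injective.injOn
  rw [Fin.card_Icc, Nat.card_Icc] at this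
  omega

theorem Fin.le_apply_of_strictMono {k : ℕ} {f : Fin k → ℕ} (hf : StrictMono f) (c : Fin k) :
    (c : ℕ) ≤ f c := by
  have := Fin.apply_add_sub_le_of_strictMono hf (a := ⟨0, c.pos⟩) (Nat.zero_le c)
  simp only at this
  omega

theorem Fin.mem_iff_rev_lt_card_of_isUpperSet {n : ℕ} {s : Finset (Fin n)}
    (hs : IsUpperSet (s : Set (Fin n))) (i : Fin n) : i ∈ s ↔ (i.rev : ℕ) < #s := by
  rw [Fin.val_rev]
  constructor
  · intro hi
    have := card_le_card fun j hj => hs (mem_Ici.mp hj) hi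
    rw [Fin.card_Ici] at this
    omega
  · intro h
    by_contra hi
    have := card_le_card fun j hj => mem_Ioi.mpr (lt_of_not_ge fun hji => hi (hs hji hj))
    rw [Fin.card_Ioi] at this
    omega

section Structure

variable {n : ℕ} {e : Fin n → ℕ}

theorem Avoids001.le_of_lt_of_lt_self (hb : ∀ i, e i ≤ i) (he : Avoids001 e) :
    ∀ {i j : Fin n}, i < j → e i < i → e j ≤ e i := by
  intro i
  induction i using WellFoundedLT.induction with
  | _ i ih =>
    intro j hij hi
    let v : Fin n := ⟨e i, hi.trans i.isLt⟩
    have hvi : v < i := hi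
    rcases (hb v).lt_or_eq with hv | hv
    · exact (ih v hvi (hvi.trans hij) hv).trans hv.le
    · by_contra! h
      exact he ⟨v, i, j, hvi, hij, hv, h⟩

theorem avoids001_iff (hb : ∀ i, e i ≤ i) :
    Avoids001 e ↔ ∀ ⦃i j : Fin n⦄, i < j → e i < i → e j ≤ e i := by
  refine ⟨fun he _ _ => he.le_of_lt_of_lt_self hb, fun h => ?_⟩
  rintro ⟨i, j, k, hij, hjk, heq, hlt⟩
  rcases (hb j).lt_or_eq with hj | hj
  · exact (h hjk hj).not_gt hlt
  · have := hb i
    have : (i : ℕ) < j := hij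
    omega

end Structure

section Code

variable {n : ℕ}

def dropSet (e : Fin n → ℕ) : Finset (Fin n) := {i | e i < i}

def code (e : Fin n → ℕ) : Finset ℕ := (dropSet e).image fun i => e i + i.rev

def ofCode (n : ℕ) (S : Finset ℕ) (i : Fin n) : ℕ :=
  if h : (i.rev : ℕ) < #S then S.orderEmbOfFin rfl ⟨i.rev, h⟩ - i.rev else i

theorem code_subset_range (e : Fin n → ℕ) : code e ⊆ range (n - 1) := by
  intro x hx
  obtain ⟨i, hi, rfl⟩ := mem_image.mp hx
  rw [dropSet, mem_filter] at hi
  rw [mem_range, Fin.val_rev]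
  omega

theorem card_code_le (e : Fin n → ℕ) : #(code e) ≤ n := by
  have := card_le_card (code_subset_range e)
  rw [card_range] at this
  omega

variable {e : Fin n → ℕ}

theorem isUpperSet_dropSet (hb : ∀ i, e i ≤ i) (he : Avoids001 e) :
    IsUpperSet (dropSet e : Set (Fin n)) := by
  intro i j hij hi
  simp only [dropSet, coe_filter, Set.mem_ofPred_eq, mem_univ, true_and] at hi ⊢
  rcases hij.lt_or_eq with hij | rfl
  · have := he.le_of_lt_of_lt_self hb hij hi
    have : (i : ℕ) < j := hij
    omega
  · exact hi

theorem strictAntiOn_dropSet (hb : ∀ i, e i ≤ i) (he : Avoids001 e) :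
    StrictAntiOn (fun i : Fin n => e i + i.rev) (dropSet e) := by
  intro i hi j _ hij
  have := he.le_of_lt_of_lt_self hb hij (mem_filter.mp hi).2
  have := Fin.rev_lt_rev.mpr hij
  simp only
  omega

theorem card_code (hb : ∀ i, e i ≤ i) (he : Avoids001 e) : #(code e) = #(dropSet e) :=
  card_image_of_injOn (strictAntiOn_dropSet hb he).injOn

theorem mem_dropSet_iff (hb : ∀ i, e i ≤ i) (he : Avoids001 e) (i : Fin n) :
    i ∈ dropSet e ↔ (i.rev : ℕ) < #(code e) := by
  rw [card_code hb he]
  exact Fin.mem_iff_rev_lt_card_of_isUpperSet (isUpperSet_dropSet hb he) i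

theorem orderEmbOfFin_code (hb : ∀ i, e i ≤ i) (he : Avoids001 e) (c : Fin #(code e)) :
    (code e).orderEmbOfFin rfl c = e (Fin.castLE (card_code_le e) c).rev + c := by
  have hmem : ∀ c : Fin #(code e), (Fin.castLE (card_code_le e) c).rev ∈ dropSet e := fun c => by
    simp [mem_dropSet_iff hb he]
  refine (congrFun (orderEmbOfFin_unique rfl
    (f := fun c => e (Fin.castLE (card_code_le e) c).rev + c) ?_ ?_) c).symm
  · exact fun c => mem_image.mpr ⟨_, hmem c, by simp⟩
  · intro a b hab
    have := strictAntiOn_dropSet hb he (hmem b) (hmem a) (Fin.rev_lt_rev.mpr hab)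
    simpa using this

theorem ofCode_code (hb : ∀ i, e i ≤ i) (he : Avoids001 e) : ofCode n (code e) = e := by
  funext i
  unfold ofCode
  split_ifs with h
  · have : (Fin.castLE (card_code_le e) ⟨i.rev, h⟩).rev = i := Fin.ext (by simp; omega)
    rw [orderEmbOfFin_code hb he, this, Fin.val_mk, Nat.add_sub_cancel]
  · have := hb i
    have : ¬ e i < i := fun hi => h ((mem_dropSet_iff hb he i).mp (mem_filter.mpr ⟨mem_univ _, hi⟩))
    omega

variable {S : Finset ℕ}

theorem ofCode_add_rev (i : Fin n) (h : (i.rev : ℕ) < #S) :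
    ofCode n S i + i.rev = S.orderEmbOfFin rfl ⟨i.rev, h⟩ := by
  have := Fin.le_apply_of_strictMono (S.orderEmbOfFin rfl).strictMono ⟨i.rev, h⟩
  dsimp only at this
  rw [ofCode, dif_pos h]
  omega

theorem ofCode_lt_iff (hS : S ⊆ range (n - 1)) (i : Fin n) :
    ofCode n S i < i ↔ (i.rev : ℕ) < #S := by
  refine ⟨fun hi => ?_, fun h => ?_⟩
  · by_contra h
    rw [ofCode, dif_neg h] at hi
    exact lt_irrefl _ hi
  · have hlt := mem_range.mp (hS (orderEmbOfFin_mem S rfl ⟨i.rev, h⟩))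
    have := ofCode_add_rev i h
    have := card_le_card hS
    rw [card_range] at this
    have := Fin.val_rev i
    omega

theorem ofCode_le (hS : S ⊆ range (n - 1)) (i : Fin n) : ofCode n S i ≤ i := by
  by_cases h : (i.rev : ℕ) < #S
  · exact ((ofCode_lt_iff hS i).mpr h).le
  · rw [ofCode, dif_neg h]

theorem avoids001_ofCode (hS : S ⊆ range (n - 1)) : Avoids001 (ofCode n S) := by
  refine (avoids001_iff (ofCode_le hS)).mpr fun i j hij hi => ?_
  have hi := (ofCode_lt_iff hS i).mp hi
  have hrev : (j.rev : ℕ) < i.rev := Fin.rev_lt_rev.mpr hij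
  have hj : (j.rev : ℕ) < #S := hrev.trans hi
  have := Fin.apply_add_sub_le_of_strictMono (S.orderEmbOfFin rfl).strictMono
    (a := ⟨j.rev, hj⟩) (b := ⟨i.rev, hi⟩) hrev.le
  have := ofCode_add_rev i hi
  have := ofCode_add_rev j hj
  simp only at *
  omega

theorem code_ofCode (hS : S ⊆ range (n - 1)) : code (ofCode n S) = S := by
  ext x
  simp only [code, dropSet, mem_image, mem_filter, mem_univ, true_and, ofCode_lt_iff hS]
  constructor
  · rintro ⟨i, hi, rfl⟩
    rw [ofCode_add_rev i hi]
    exact orderEmbOfFin_mem S rfl _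
  · intro hx
    obtain ⟨c, rfl⟩ : x ∈ Set.range (S.orderEmbOfFin rfl) := by rwa [range_orderEmbOfFin]
    have hk : #S ≤ n := (card_le_card hS).trans (by simp)
    refine ⟨(Fin.castLE hk c).rev, by simp, ?_⟩
    rw [ofCode_add_rev _ (by simp)]
    simp

end Code

theorem inv_avoid_001_eq_two_pow_general (n : ℕ) :
    Set.ncard {e : Fin n → ℕ | (∀ i : Fin n, e i ≤ (i : ℕ)) ∧
      ¬ ∃ i j k : Fin n, i < j ∧ j < k ∧ e i = e j ∧ e j < e k} =
    2 ^ (n - 1) := by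
  have hbij : Set.BijOn code {e : Fin n → ℕ | (∀ i, e i ≤ i) ∧ Avoids001 e}
      ((range (n - 1)).powerset : Set (Finset ℕ)) :=
    Set.InvOn.bijOn
      ⟨fun e he => ofCode_code he.1 he.2, fun S hS => code_ofCode (mem_powerset.mp hS)⟩
      (fun e _ => mem_powerset.mpr (code_subset_range e))
      (fun S hS => ⟨ofCode_le (mem_powerset.mp hS), avoids001_ofCode (mem_powerset.mp hS)⟩)
  refine hbij.ncard_eq.trans ?_
  rw [Set.ncard_coe_finset, card_powerset, card_range]

/-- For `n ≥ 1`, the number of inversion sequences of length `n` avoiding the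
pattern 001 equals `2^(n-1)`. -/
theorem inv_avoid_001_eq_two_pow (n : ℕ) (hn : 1 ≤ n) :
    Set.ncard {e : Fin n → ℕ | (∀ i : Fin n, e i ≤ (i : ℕ)) ∧
      ¬ ∃ i j k : Fin n, i < j ∧ j < k ∧ e i = e j ∧ e j < e k} =
    2 ^ (n - 1) :=
  inv_avoid_001_eq_two_pow_general n
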